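/- Let N ≥ 2, δ ∈ (0,1), θ₀ ∈ [0, π/2), and let u : {0,1,…,N} → ℝ³ satisfy ‖u^i‖ = 1 for all i, the periodic boundary condition ⟨u¹,u⁰⟩ = ⟨u^N,u^{N−1}⟩, and ⟨u^i,u^{i+1}⟩ ≥ cos θ₀ for all 0 ≤ i ≤ N−1. Define z^i := (u^i × u^{i+1})/√(2δ). Then H_δ(u) ≥ 2δ²·Σ_{i=0}^{N−2} ( ‖u^{i+1} − u^i‖²/(2δ) − 1 )² + (1 − tan²θ₀)·δ·Σ_{i=0}^{N−2} ‖z^{i+1} − z^i‖². -/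

import Mathlib

open MeasureTheory Filter
open scoped RealInnerProductSpace

/-- The cross product on Euclidean `ℝ³`. -/
noncomputable def cross3 (a b : EuclideanSpace ℝ (Fin 3)) : EuclideanSpace ℝ (Fin 3) :=
  (WithLp.equiv 2 (Fin 3 → ℝ)).symm
    (crossProduct ((WithLp.equiv 2 (Fin 3 → ℝ)) a) ((WithLp.equiv 2 (Fin 3 → ℝ)) b))

/-!
For unit vectors `a, b, c` the second difference `c - 2(1-δ)b + a` has squared norm
`((x + y)/2)² + ‖b × c - a × b‖²` with `x = ‖b - a‖² - 2δ`, `y = ‖c - b‖² - 2δ`.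
Writing `((x + y)/2)² = (x² + y²)/2 - (x - y)²/4`, the defect `(x - y)² = 4(⟪a, b⟫ - ⟪b, c⟫)²`
is at most `4 tan²θ₀ ‖b × c - a × b‖²`: the inner products are at least `cos θ₀`, while the
cross-product norms `√(1 - ⟪·,·⟫²)` are at most `sin θ₀`. Summing along the chain, the periodic
boundary condition lets every length term be counted twice.
-/

theorem Finset.sum_range_shift_of_eq {M : Type*} [AddCommGroup M] (f : ℕ → M) {n : ℕ}
    (h : f n = f 0) : ∑ i ∈ Finset.range n, f (i + 1) = ∑ i ∈ Finset.range n, f i := by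
  rw [← sub_eq_zero, ← Finset.sum_sub_distrib, Finset.sum_range_sub, h, sub_self]

theorem mul_norm_inv_sqrt_smul_sq {E : Type*} [NormedAddCommGroup E] [NormedSpace ℝ E]
    {δ : ℝ} (hδ : 0 < δ) (v : E) :
    δ * ‖(Real.sqrt (2 * δ))⁻¹ • v‖ ^ 2 = ‖v‖ ^ 2 / 2 := by
  rw [norm_smul, mul_pow, norm_inv, Real.norm_of_nonneg (Real.sqrt_nonneg _), inv_pow,
    Real.sq_sqrt (by positivity)]
  field_simp

theorem inner_cross3_cross3 (a b c d : EuclideanSpace ℝ (Fin 3)) :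
    ⟪cross3 a b, cross3 c d⟫ = ⟪a, c⟫ * ⟪b, d⟫ - ⟪a, d⟫ * ⟪b, c⟫ := by
  simp only [cross3, EuclideanSpace.inner_eq_star_dotProduct, star_trivial]
  simp only [WithLp.equiv_apply, WithLp.equiv_symm_apply, cross_dot_cross, dotProduct_comm]

theorem norm_cross3_sq (a b : EuclideanSpace ℝ (Fin 3)) :
    ‖cross3 a b‖ ^ 2 = ‖a‖ ^ 2 * ‖b‖ ^ 2 - ⟪a, b⟫ ^ 2 := by
  simp only [← real_inner_self_eq_norm_sq, inner_cross3_cross3, real_inner_comm a b]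
  ring

theorem norm_second_difference_sq (δ : ℝ) {a b c : EuclideanSpace ℝ (Fin 3)}
    (ha : ‖a‖ = 1) (hb : ‖b‖ = 1) (hc : ‖c‖ = 1) :
    ‖c - (2 * (1 - δ)) • b + a‖ ^ 2
      = ((‖b - a‖ ^ 2 + ‖c - b‖ ^ 2) / 2 - 2 * δ) ^ 2 + ‖cross3 b c - cross3 a b‖ ^ 2 := by
  have haa : ⟪a, a⟫ = 1 := by rw [real_inner_self_eq_norm_sq, ha, one_pow]
  have hbb : ⟪b, b⟫ = 1 := by rw [real_inner_self_eq_norm_sq, hb, one_pow]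
  have hcc : ⟪c, c⟫ = 1 := by rw [real_inner_self_eq_norm_sq, hc, one_pow]
  simp only [← real_inner_self_eq_norm_sq, inner_sub_left, inner_sub_right, inner_add_left,
    inner_add_right, real_inner_smul_left, real_inner_smul_right, inner_cross3_cross3,
    haa, hbb, hcc, real_inner_comm a b, real_inner_comm a c, real_inner_comm b c]
  ring

theorem sq_mul_sq_sub_le_of_sq_add_sq_eq_one {c p q s t : ℝ} (hc : 0 ≤ c)
    (hp : c ≤ p) (hq : c ≤ q) (hs : s ^ 2 + p ^ 2 = 1) (ht : t ^ 2 + q ^ 2 = 1) :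
    c ^ 2 * (p - q) ^ 2 ≤ (1 - c ^ 2) * (t - s) ^ 2 := by
  have hpq : (p - q) * (p + q) = (t - s) * (t + s) := by linear_combination hs - ht
  have hpq_sum : (2 * c) ^ 2 ≤ (p + q) ^ 2 := pow_le_pow_left₀ (by positivity) (by linarith) 2
  have hts_sum : (t + s) ^ 2 ≤ 4 * (1 - c ^ 2) := by nlinarith [sq_nonneg (t - s)]
  nlinarith [sq_nonneg (t - s)]

theorem sq_inner_sub_inner_le_tan_sq_mul {θ : ℝ} (hθ : 0 < Real.cos θ)
    {a b c : EuclideanSpace ℝ (Fin 3)} (ha : ‖a‖ = 1) (hb : ‖b‖ = 1) (hc : ‖c‖ = 1)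
    (hab : Real.cos θ ≤ ⟪a, b⟫) (hbc : Real.cos θ ≤ ⟪b, c⟫) :
    (⟪a, b⟫ - ⟪b, c⟫) ^ 2 ≤ Real.tan θ ^ 2 * ‖cross3 b c - cross3 a b‖ ^ 2 := by
  have hs : ‖cross3 a b‖ ^ 2 + ⟪a, b⟫ ^ 2 = 1 := by rw [norm_cross3_sq, ha, hb]; ring
  have ht : ‖cross3 b c‖ ^ 2 + ⟪b, c⟫ ^ 2 = 1 := by rw [norm_cross3_sq, hb, hc]; ring
  have hnorms : (‖cross3 b c‖ - ‖cross3 a b‖) ^ 2 ≤ ‖cross3 b c - cross3 a b‖ ^ 2 :=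
    sq_le_sq.mpr ((abs_norm_sub_norm_le _ _).trans (le_abs_self _))
  have hmain := sq_mul_sq_sub_le_of_sq_add_sq_eq_one hθ.le hab hbc hs ht
  have htan : Real.tan θ ^ 2 = (1 - Real.cos θ ^ 2) / Real.cos θ ^ 2 := by
    rw [Real.tan_eq_sin_div_cos, div_pow, Real.sin_sq]
  rw [htan, div_mul_eq_mul_div, le_div_iff₀ (by positivity)]
  nlinarith [Real.cos_sq_le_one θ]

theorem energy_term_lower_bound (δ : ℝ) {θ : ℝ} (hθ : 0 < Real.cos θ)
    {a b c : EuclideanSpace ℝ (Fin 3)} (ha : ‖a‖ = 1) (hb : ‖b‖ = 1) (hc : ‖c‖ = 1)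
    (hab : Real.cos θ ≤ ⟪a, b⟫) (hbc : Real.cos θ ≤ ⟪b, c⟫) :
    (‖b - a‖ ^ 2 - 2 * δ) ^ 2 / 4 + (‖c - b‖ ^ 2 - 2 * δ) ^ 2 / 4
      + (1 - Real.tan θ ^ 2) * (‖cross3 b c - cross3 a b‖ ^ 2 / 2)
      ≤ (1 / 2 : ℝ) * ‖c - (2 * (1 - δ)) • b + a‖ ^ 2 := by
  have hba : ‖b - a‖ ^ 2 = 2 - 2 * ⟪a, b⟫ := by
    rw [norm_sub_sq_real, ha, hb, real_inner_comm]; ring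
  have hcb : ‖c - b‖ ^ 2 = 2 - 2 * ⟪b, c⟫ := by
    rw [norm_sub_sq_real, hb, hc, real_inner_comm]; ring
  rw [norm_second_difference_sq δ ha hb hc, hba, hcb]
  nlinarith [sq_inner_sub_inner_le_tan_sq_mul hθ ha hb hc hab hbc]

/-- lower bound of the renormalized chain energy by the discrete
Modica–Mortola functional of the chirality, with gradient prefactor `1 − tan²θ₀`,
when consecutive spins form an angle at most `θ₀`. -/
theorem stmt6 (N : ℕ) (hN : 2 ≤ N) (δ : ℝ) (hδ : δ ∈ Set.Ioo (0 : ℝ) 1)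
    (θ₀ : ℝ) (hθ₀ : θ₀ ∈ Set.Ico 0 (Real.pi / 2))
    (u : ℕ → EuclideanSpace ℝ (Fin 3)) (hu : ∀ i ≤ N, ‖u i‖ = 1)
    (hper : ⟪u 1, u 0⟫ = ⟪u N, u (N - 1)⟫)
    (hangle : ∀ i ≤ N - 1, Real.cos θ₀ ≤ ⟪u i, u (i + 1)⟫)
    (z : ℕ → EuclideanSpace ℝ (Fin 3))
    (hz : ∀ i ≤ N - 1, z i = (Real.sqrt (2 * δ))⁻¹ • cross3 (u i) (u (i + 1))) :
    2 * δ ^ 2 * ∑ i ∈ Finset.range (N - 1),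
          (‖u (i + 1) - u i‖ ^ 2 / (2 * δ) - 1) ^ 2
      + (1 - Real.tan θ₀ ^ 2) * δ * ∑ i ∈ Finset.range (N - 1), ‖z (i + 1) - z i‖ ^ 2
      ≤ (1 / 2 : ℝ) * ∑ i ∈ Finset.range (N - 1),
          ‖u (i + 2) - (2 * (1 - δ)) • u (i + 1) + u i‖ ^ 2 := by
  obtain ⟨hδ, -⟩ := hδ
  have hcos : 0 < Real.cos θ₀ :=
    Real.cos_pos_of_mem_Ioo ⟨by linarith [hθ₀.1, Real.pi_pos], hθ₀.2⟩
  obtain ⟨n, rfl⟩ : ∃ n, N = n + 1 := ⟨N - 1, by omega⟩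
  rw [Nat.add_sub_cancel] at hper hangle hz ⊢
  set e : ℕ → ℝ := fun i ↦ ‖u (i + 1) - u i‖ ^ 2 - 2 * δ
  have he : e n = e 0 := by
    simp only [e, norm_sub_sq_real, hu _ le_rfl, hu n (by omega), hu 1 (by omega),
      hu 0 (by omega), zero_add]
    rw [hper]
  have hlength : 2 * δ ^ 2 * ∑ i ∈ Finset.range n, (‖u (i + 1) - u i‖ ^ 2 / (2 * δ) - 1) ^ 2
      = ∑ i ∈ Finset.range n, (e i ^ 2 / 4 + e (i + 1) ^ 2 / 4) := by
    rw [Finset.sum_add_distrib,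
      Finset.sum_range_shift_of_eq (fun i ↦ e i ^ 2 / 4) (by rw [he]), Finset.mul_sum,
      ← Finset.sum_add_distrib]
    refine Finset.sum_congr rfl fun i _ ↦ ?_
    field_simp
    ring
  have hterm : ∀ i ∈ Finset.range n, e i ^ 2 / 4 + e (i + 1) ^ 2 / 4
      + (1 - Real.tan θ₀ ^ 2) * δ * ‖z (i + 1) - z i‖ ^ 2
      ≤ (1 / 2 : ℝ) * ‖u (i + 2) - (2 * (1 - δ)) • u (i + 1) + u i‖ ^ 2 := by
    intro i hi
    have hi : i < n := Finset.mem_range.mp hi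
    rw [hz i (by omega), hz (i + 1) (by omega), ← smul_sub, mul_assoc,
      mul_norm_inv_sqrt_smul_sq hδ]
    exact energy_term_lower_bound δ hcos (hu i (by omega)) (hu (i + 1) (by omega))
      (hu (i + 2) (by omega)) (hangle i (by omega)) (hangle (i + 1) (by omega))
  calc _ = ∑ i ∈ Finset.range n, (e i ^ 2 / 4 + e (i + 1) ^ 2 / 4
          + (1 - Real.tan θ₀ ^ 2) * δ * ‖z (i + 1) - z i‖ ^ 2) := by
        rw [hlength, Finset.mul_sum, ← Finset.sum_add_distrib]
    _ ≤ _ := by rw [Finset.mul_sum]; exact Finset.sum_le_sum hterm
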